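/- The ring R = 𝔽₂[ρ, r₀, r₁, r₂, …]/(rᵢ² − ρ·rᵢ₊₁ : i ∈ ℕ) is a free module over the polynomial ring 𝔽₂[ρ] (acting through the 𝔽₂-algebra map 𝔽₂[ρ] → R sending ρ to ρ̄), with basis given by the images of the squarefree monomials ∏_{i∈T} rᵢ, where T ranges over all finite subsets of ℕ. -/

import Mathlib

open MvPolynomial

noncomputable section

/-- The polynomial ring `𝔽₂[ρ, r₀, r₁, …]`: variable `none` is `ρ`, `some i` is `rᵢ`. -/
abbrev P : Type := MvPolynomial (Option ℕ) (ZMod 2)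

/-- The ideal generated by the relations `rᵢ² − ρ·rᵢ₊₁`, `i ∈ ℕ`. -/
def relIdeal : Ideal P :=
  Ideal.span (Set.range fun i : ℕ => (X (some i) : P) ^ 2 - X none * X (some (i + 1)))

/-- `R = 𝔽₂[ρ, r₀, r₁, …]/(rᵢ² − ρ·rᵢ₊₁ : i ∈ ℕ)`. -/
abbrev R : Type := P ⧸ relIdeal

/-- The image `ρ̄` of `ρ` in `R`. -/
def ρbar : R := Ideal.Quotient.mk relIdeal (X none)

/-- The image `r̄ᵢ` of `rᵢ` in `R`. -/
def rbar (i : ℕ) : R := Ideal.Quotient.mk relIdeal (X (some i))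

/-- The `𝔽₂[ρ]`-module structure on `R` through the `𝔽₂`-algebra map
`𝔽₂[ρ] → R` sending `ρ` to `ρ̄`. -/
instance : Module (Polynomial (ZMod 2)) R :=
  ((Polynomial.aeval ρbar : Polynomial (ZMod 2) →ₐ[ZMod 2] R) :
    Polynomial (ZMod 2) →+* R).toModule

/-!
The relation `r̄ₙ · r̄ₙ = ρ̄ · r̄ₙ₊₁` lets one absorb a repeated factor into the next variable, so
multiplying a squarefree monomial by `r̄ₙ` stays in the `𝔽₂[ρ]`-span of the squarefree monomials;
hence they span. For independence, evaluate `ρ ↦ ρ` and `rᵢ ↦ ρ · t ^ 2 ^ i` in `𝔽₂[ρ][t]`, which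
respects the relations: the monomial `∏_{i∈T} r̄ᵢ` goes to `ρ ^ |T| · t ^ (∑_{i∈T} 2 ^ i)`, and by
uniqueness of binary expansions these have pairwise distinct degrees.
-/

theorem Polynomial.linearIndependent_monomial {A ι : Type*} [Ring A] [NoZeroDivisors A]
    {e : ι → ℕ} (he : Function.Injective e) {c : ι → A} (hc : ∀ i, c i ≠ 0) :
    LinearIndependent A fun i => Polynomial.monomial (e i) (c i) := by
  classical
  rw [linearIndependent_iff']
  intro s g hg i hi
  have hcoeff := congrArg (Polynomial.coeff · (e i)) hg
  simp only [Polynomial.finsetSum_coeff, Polynomial.coeff_smul, Polynomial.coeff_monomial,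
    he.eq_iff, smul_eq_mul, mul_ite, mul_zero, Finset.sum_ite_eq', if_pos hi,
    Polynomial.coeff_zero] at hcoeff
  exact (mul_eq_zero.mp hcoeff).resolve_right (hc i)

theorem Polynomial.aeval_C_X {S : Type*} [CommSemiring S] (p : Polynomial S) :
    Polynomial.aeval (Polynomial.C Polynomial.X : Polynomial (Polynomial S)) p = Polynomial.C p :=
  (Polynomial.aeval_algHom_apply Polynomial.CAlgHom Polynomial.X p).trans
    (congrArg Polynomial.CAlgHom (Polynomial.aeval_X_left_apply p))

section SquarefreeBasis

local notation "A" => Polynomial (ZMod 2)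

lemma smul_eq_aeval_ρbar_mul (a : A) (x : R) : a • x = Polynomial.aeval ρbar a * x := rfl

lemma rbar_sq (i : ℕ) : rbar i ^ 2 = ρbar * rbar (i + 1) := by
  rw [← sub_eq_zero]
  exact Ideal.Quotient.eq_zero_iff_mem.mpr (Ideal.subset_span ⟨i, rfl⟩)

def squarefreeSpan : Submodule A R :=
  Submodule.span A (Set.range fun T : Finset ℕ => ∏ i ∈ T, rbar i)

lemma prod_rbar_mem_squarefreeSpan (T : Finset ℕ) : ∏ i ∈ T, rbar i ∈ squarefreeSpan :=
  Submodule.subset_span ⟨T, rfl⟩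

lemma ρbar_mul_mem_squarefreeSpan {x : R} (hx : x ∈ squarefreeSpan) :
    ρbar * x ∈ squarefreeSpan := by
  simpa [smul_eq_aeval_ρbar_mul] using squarefreeSpan.smul_mem (Polynomial.X : A) hx

lemma rbar_mul_prod_rbar_mem_squarefreeSpan (T : Finset ℕ) (n : ℕ) :
    rbar n * ∏ i ∈ T, rbar i ∈ squarefreeSpan := by
  induction T using Finset.strongInduction generalizing n with
  | H T ih =>
    by_cases hn : n ∈ T
    · rw [← Finset.mul_prod_erase T _ hn, ← mul_assoc, ← sq, rbar_sq, mul_assoc]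
      exact ρbar_mul_mem_squarefreeSpan (ih _ (Finset.erase_ssubset hn) (n + 1))
    · rw [← Finset.prod_insert hn]
      exact prod_rbar_mem_squarefreeSpan _

lemma rbar_mul_mem_squarefreeSpan (n : ℕ) {x : R} (hx : x ∈ squarefreeSpan) :
    rbar n * x ∈ squarefreeSpan := by
  induction hx using Submodule.span_induction with
  | mem x hx =>
    obtain ⟨T, rfl⟩ := hx
    exact rbar_mul_prod_rbar_mem_squarefreeSpan T n
  | zero => simp
  | add x y _ _ hx hy => simpa [mul_add] using squarefreeSpan.add_mem hx hy
  | smul a x _ hx =>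
    simpa [smul_eq_aeval_ρbar_mul, mul_left_comm] using squarefreeSpan.smul_mem a hx

lemma squarefreeSpan_eq_top : squarefreeSpan = ⊤ := by
  refine Submodule.eq_top_iff'.mpr fun x => ?_
  obtain ⟨p, rfl⟩ := Ideal.Quotient.mk_surjective x
  induction p using MvPolynomial.induction_on with
  | C a =>
    have h : Ideal.Quotient.mk relIdeal (C a) = (Polynomial.C a : A) • ∏ i ∈ ∅, rbar i := by
      simp only [Finset.prod_empty, smul_eq_aeval_ρbar_mul, Polynomial.aeval_C, mul_one]
      rfl
    rw [h]
    exact squarefreeSpan.smul_mem _ (prod_rbar_mem_squarefreeSpan ∅)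
  | add p q hp hq => simpa using squarefreeSpan.add_mem hp hq
  | mul_X p o hp =>
    rw [map_mul, mul_comm]
    cases o with
    | none => exact ρbar_mul_mem_squarefreeSpan hp
    | some n => exact rbar_mul_mem_squarefreeSpan n hp

def twoPowValue : Option ℕ → Polynomial A :=
  fun o => o.elim (Polynomial.C Polynomial.X) fun i => Polynomial.monomial (2 ^ i) Polynomial.X

def twoPowEval : R →ₐ[ZMod 2] Polynomial A :=
  Ideal.Quotient.liftₐ relIdeal (aeval twoPowValue)
    fun p hp => by
      refine (Ideal.span_le.mpr ?_ : relIdeal ≤ RingHom.ker _) hp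
      rintro _ ⟨i, rfl⟩
      simp [twoPowValue, Polynomial.monomial_mul_monomial, Polynomial.C_mul_monomial, pow_succ,
        mul_two]

lemma twoPowEval_ρbar : twoPowEval ρbar = Polynomial.C Polynomial.X :=
  aeval_X twoPowValue none

lemma twoPowEval_rbar (i : ℕ) :
    twoPowEval (rbar i) = Polynomial.monomial (2 ^ i) Polynomial.X :=
  aeval_X twoPowValue (some i)

lemma twoPowEval_prod_rbar (T : Finset ℕ) :
    twoPowEval (∏ i ∈ T, rbar i) =
      Polynomial.monomial (∑ i ∈ T, 2 ^ i) (Polynomial.X ^ T.card) := by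
  simp only [map_prod, twoPowEval_rbar, ← Polynomial.C_mul_X_pow_eq_monomial, map_pow,
    Finset.prod_mul_distrib, Finset.prod_const, Finset.prod_pow_eq_pow_sum]

lemma twoPowEval_smul (a : A) (x : R) : twoPowEval (a • x) = a • twoPowEval x := by
  rw [smul_eq_aeval_ρbar_mul, map_mul, ← Polynomial.aeval_algHom_apply, twoPowEval_ρbar,
    Polynomial.smul_eq_C_mul, Polynomial.aeval_C_X]

def twoPowEvalₗ : R →ₗ[A] Polynomial A where
  toFun := twoPowEval
  map_add' := map_add twoPowEval
  map_smul' := twoPowEval_smul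

lemma linearIndependent_prod_rbar : LinearIndependent A fun T : Finset ℕ => ∏ i ∈ T, rbar i := by
  refine LinearIndependent.of_comp twoPowEvalₗ ?_
  rw [show twoPowEvalₗ ∘ _ = _ from funext twoPowEval_prod_rbar]
  exact Polynomial.linearIndependent_monomial (Finset.geomSum_injective le_rfl)
    fun _ => pow_ne_zero _ Polynomial.X_ne_zero

end SquarefreeBasis

/-- `R` is a free `𝔽₂[ρ]`-module with basis the squarefree monomials `∏_{i∈T} r̄ᵢ`,
`T` ranging over finite subsets of `ℕ`. -/
theorem stmt5 :
    ∃ b : Module.Basis (Finset ℕ) (Polynomial (ZMod 2)) R,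
      ∀ T : Finset ℕ, b T = ∏ i ∈ T, rbar i :=
  ⟨.mk linearIndependent_prod_rbar squarefreeSpan_eq_top.ge,
    Module.Basis.mk_apply linearIndependent_prod_rbar _⟩
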